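/- arXiv:2301.06485 — 5 statements merged into one kernel-verified Lean document; each statement's English description precedes it below -/
import Mathlib

section
/- If A is a set of vectors in {0,1}^d such that any two vectors in A have Hamming distance at most 2t, and d > 2t, then |A| ≤ ∑_{i=0}^{t} C(d,i). -/
/-- Hamming distance between binary vectors. -/
def distB {d : ℕ} (u v : Fin d → Bool) : ℕ :=
  (Finset.univ.filter (fun i => u i ≠ v i)).card

/-- Hamming distance between vectors in {0,1,*}^d (entries `Option Bool`, `none` = joker):
counts coordinates where both entries are non-joker and differ. -/
def distS {d : ℕ} (u v : Fin d → Option Bool) : ℕ :=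
  (Finset.univ.filter (fun i => ∃ a b : Bool, u i = some a ∧ v i = some b ∧ a ≠ b)).card

/-- `v ∈ {0,1}^d` is covered by `u ∈ {0,1,*}^d` if they agree on all non-joker coordinates of `u`. -/
def covers {d : ℕ} (u : Fin d → Option Bool) (v : Fin d → Bool) : Prop :=
  ∀ i : Fin d, ∀ b : Bool, u i = some b → v i = b

/-- Number of joker (`*`) coordinates of `u`. -/
def jokers {d : ℕ} (u : Fin d → Option Bool) : ℕ :=
  (Finset.univ.filter (fun i => u i = none)).card

/-- Hamming weight of a binary vector. -/
def weight {d : ℕ} (v : Fin d → Bool) : ℕ :=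
  (Finset.univ.filter (fun i => v i = true)).card

/-!
Down-compressions preserve the diameter and turn the family into a down-set, where the diameter
bound reads `#(s ∪ u) ≤ 2t` because `(s \ u) ∆ u = s ∪ u`. Families on a ground set `G` with
pairwise unions of size at most `2t < #G` are then bounded by induction on `G`. If `#G = 2t + 1`
the family contains no complementary pair, hence has at most `2 ^ (2t) = ∑ i ≤ t, C(2t+1, i)`
members. Otherwise fix `a ∈ G`, shift `a` towards every other element, and split the family by
membership of `a`. The sets avoiding `a` keep the bound `2t`; for two sets `s, u` containing `a`
some `x ∈ G` lies outside `s ∪ u`, and shiftedness puts `s - a + x` into the family, so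
`#((s ∪ u) \ {a}) ≤ 2t - 2`. Pascal's rule closes the induction.
-/

open Finset
open scoped symmDiff FinsetFamily

section DownCompression

variable {α : Type*} [DecidableEq α] {a b : α} {s u : Finset α} {A : Finset (Finset α)} {k : ℕ}

lemma symmDiff_subset_insert_symmDiff_erase (a : α) (s u : Finset α) :
    s ∆ u ⊆ insert a s ∆ u.erase a := by
  intro x
  by_cases hx : x = a
  · subst hx; simp [mem_symmDiff]
  · simp [mem_symmDiff, hx]

lemma insert_symmDiff_insert (hs : a ∉ s) (hu : a ∉ u) : insert a s ∆ insert a u = s ∆ u := by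
  ext x
  by_cases hx : x = a
  · subst hx; simp [mem_symmDiff, hs, hu]
  · simp [mem_symmDiff, hx]

lemma notMem_of_insert_mem_of_notMem (hs : s ∉ A) (has : insert a s ∈ A) : a ∉ s :=
  fun h => hs (insert_eq_of_mem h ▸ has)

lemma card_symmDiff_le_of_mem_downCompression (hA : ∀ s ∈ A, ∀ u ∈ A, #(s ∆ u) ≤ k) :
    ∀ s ∈ 𝓓 a A, ∀ u ∈ 𝓓 a A, #(s ∆ u) ≤ k := by
  have moved_kept : ∀ s u, insert a s ∈ A → u.erase a ∈ A → #(s ∆ u) ≤ k :=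
    fun s u has hu =>
      (card_le_card (symmDiff_subset_insert_symmDiff_erase a s u)).trans (hA _ has _ hu)
  intro s hs u hu
  rw [Down.mem_compression] at hs hu
  rcases hs with ⟨hs, hsa⟩ | ⟨hs, has⟩ <;> rcases hu with ⟨hu, hua⟩ | ⟨hu, hau⟩
  · exact hA s hs u hu
  · rw [symmDiff_comm]; exact moved_kept u s hau hsa
  · exact moved_kept s u has hua
  · rw [← insert_symmDiff_insert (notMem_of_insert_mem_of_notMem hs has)
      (notMem_of_insert_mem_of_notMem hu hau)]
    exact hA _ has _ hau

lemma erase_mem_downCompression (hA : ∀ s ∈ A, s.erase b ∈ A) (hs : s ∈ 𝓓 a A) :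
    s.erase b ∈ 𝓓 a A := by
  obtain rfl | hba := eq_or_ne b a
  · exact Down.erase_mem_compression_of_mem_compression hs
  rw [Down.mem_compression] at hs
  rcases hs with ⟨hs, hsa⟩ | ⟨hs, has⟩
  · rw [Down.mem_compression, erase_right_comm]
    exact Or.inl ⟨hA s hs, hA _ hsa⟩
  · have h := Down.erase_mem_compression (a := a) (hA _ has)
    rwa [erase_insert_of_ne (Ne.symm hba), erase_insert
      (fun h => notMem_of_insert_mem_of_notMem hs has (mem_of_mem_erase h))] at h

lemma exists_erase_closed_of_card_symmDiff_le (S : Finset α)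
    (hA : ∀ s ∈ A, ∀ u ∈ A, #(s ∆ u) ≤ k) :
    ∃ B : Finset (Finset α), #B = #A ∧ (∀ s ∈ B, ∀ u ∈ B, #(s ∆ u) ≤ k) ∧
      ∀ b ∈ S, ∀ s ∈ B, s.erase b ∈ B := by
  induction S using Finset.induction_on with
  | empty => exact ⟨A, rfl, hA, by simp⟩
  | insert a S _ ih =>
    obtain ⟨B, hcard, hB, hclosed⟩ := ih
    refine ⟨𝓓 a B, (Down.card_compression a B).trans hcard,
      card_symmDiff_le_of_mem_downCompression hB, ?_⟩
    rintro b hb s hs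
    rcases mem_insert.1 hb with rfl | hb
    · exact Down.erase_mem_compression_of_mem_compression hs
    · exact erase_mem_downCompression (hclosed b hb) hs

lemma sdiff_mem_of_forall_erase_mem {B : Finset (Finset α)} (hB : ∀ b, ∀ s ∈ B, s.erase b ∈ B)
    (hs : s ∈ B) (u : Finset α) : s \ u ∈ B := by
  induction u using Finset.induction_on with
  | empty => simpa
  | insert b u _ ih => rw [sdiff_insert]; exact hB b _ ih

lemma exists_card_union_le_of_card_symmDiff_le [Fintype α]
    (hA : ∀ s ∈ A, ∀ u ∈ A, #(s ∆ u) ≤ k) :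
    ∃ B : Finset (Finset α), #B = #A ∧ ∀ s ∈ B, ∀ u ∈ B, #(s ∪ u) ≤ k := by
  obtain ⟨B, hcard, hB, hclosed⟩ := exists_erase_closed_of_card_symmDiff_le univ hA
  refine ⟨B, hcard, fun s hs u hu => ?_⟩
  have h := hB _ (sdiff_mem_of_forall_erase_mem (fun b => hclosed b (mem_univ b)) hs u) u hu
  rwa [sdiff_symmDiff_eq_sup] at h

end DownCompression

section Shifting

variable {α : Type*} [DecidableEq α] {x a : α} {s u b c : Finset α} {F : Finset (Finset α)} {k : ℕ}

lemma UV.compress_singleton (x a : α) (s : Finset α) :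
    UV.compress {x} {a} s = if x ∉ s ∧ a ∈ s then insert x (s.erase a) else s := by
  by_cases h : x ∉ s ∧ a ∈ s
  · have hxa : x ≠ a := fun hxa => h.1 (hxa ▸ h.2)
    rw [UV.compress_of_disjoint_of_le (disjoint_singleton_left.2 h.1)
      (singleton_subset_iff.2 h.2), if_pos h, sup_eq_union, union_singleton,
      sdiff_singleton_eq_erase, erase_insert_of_ne hxa]
  · rw [UV.compress, if_neg (by simpa [disjoint_singleton_left] using h), if_neg h]

lemma UV.compress_singleton_of_notMem (hx : x ∉ s) (ha : a ∈ s) :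
    UV.compress {x} {a} s = insert x (s.erase a) := by
  rw [UV.compress_singleton, if_pos ⟨hx, ha⟩]

lemma UV.compress_singleton_of_notMem_right (ha : a ∉ s) : UV.compress {x} {a} s = s := by
  rw [UV.compress_singleton, if_neg (fun h => ha h.2)]

lemma mem_or_exists_of_mem_compression_singleton (hs : s ∈ 𝓒 {x} {a} F) :
    (s ∈ F ∧ (x ∉ s → a ∈ s → insert x (s.erase a) ∈ F)) ∨
      ∃ b ∈ F, x ∉ b ∧ a ∈ b ∧ s = insert x (b.erase a) := by
  rw [UV.mem_compression] at hs
  rcases hs with ⟨hs, hcs⟩ | ⟨hs, b, hb, rfl⟩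
  · exact Or.inl ⟨hs, fun hx ha => UV.compress_singleton_of_notMem hx ha ▸ hcs⟩
  · rw [UV.compress_singleton] at hs ⊢
    split_ifs at hs ⊢ with h
    · exact Or.inr ⟨b, hb, h.1, h.2, rfl⟩
    · exact absurd hb hs

lemma card_insert_erase_union_insert_erase (hxb : x ∉ b) (hab : a ∈ b) (hxc : x ∉ c) :
    #(insert x (b.erase a) ∪ insert x (c.erase a)) = #(b ∪ c) := by
  rw [← insert_union_distrib, ← erase_union_distrib, card_insert_of_notMem (by simp [hxb, hxc]),
    card_erase_of_mem (mem_union_left _ hab), Nat.sub_add_cancel]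
  exact card_pos.2 ⟨a, mem_union_left _ hab⟩

lemma card_insert_erase_union_le (hab : a ∈ b) (hu : x ∈ u ∨ a ∉ u) :
    #(insert x (b.erase a) ∪ u) ≤ #(b ∪ u) := by
  rcases hu with hxu | hau
  · apply card_le_card
    intro y
    simp only [mem_union, mem_insert, mem_erase]
    rintro ((rfl | ⟨-, hy⟩) | hy) <;> simp [*]
  · have h : insert x (b.erase a) ∪ u = insert x ((b ∪ u).erase a) := by
      ext y
      by_cases hy : y = a
      · subst hy; simp [hau]
      · simp [hy]
    have hpos : 0 < #(b ∪ u) := card_pos.2 ⟨a, mem_union_left _ hab⟩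
    rw [h]
    refine (card_insert_le _ _).trans ?_
    rw [card_erase_of_mem (mem_union_left _ hab)]
    omega

lemma insert_erase_union_eq_union_insert_erase (hb : a ∈ b) (hu : a ∈ u) :
    insert x (b.erase a) ∪ u = b ∪ insert x (u.erase a) := by
  ext y
  by_cases hy : y = a
  · subst hy; simp [hb, hu]
  · simp [hy]

lemma card_union_le_of_mem_compression_singleton (hF : ∀ s ∈ F, ∀ u ∈ F, #(s ∪ u) ≤ k) :
    ∀ s ∈ 𝓒 {x} {a} F, ∀ u ∈ 𝓒 {x} {a} F, #(s ∪ u) ≤ k := by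
  have moved_kept : ∀ b ∈ F, a ∈ b → ∀ u ∈ F,
      (x ∉ u → a ∈ u → insert x (u.erase a) ∈ F) → #(insert x (b.erase a) ∪ u) ≤ k := by
    intro b hb hab u hu hcu
    by_cases h : x ∉ u ∧ a ∈ u
    · rw [insert_erase_union_eq_union_insert_erase hab h.2]
      exact hF _ hb _ (hcu h.1 h.2)
    · exact (card_insert_erase_union_le hab (by tauto)).trans (hF _ hb _ hu)
  intro s hs u hu
  rcases mem_or_exists_of_mem_compression_singleton hs with ⟨hs, hcs⟩ | ⟨b, hb, hxb, hab, rfl⟩ <;>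
    rcases mem_or_exists_of_mem_compression_singleton hu with ⟨hu, hcu⟩ | ⟨c, hc, hxc, hac, rfl⟩
  · exact hF s hs u hu
  · rw [union_comm]; exact moved_kept c hc hac s hs hcs
  · exact moved_kept b hb hab u hu hcu
  · rw [card_insert_erase_union_insert_erase hxb hab hxc]
    exact hF b hb c hc

lemma insert_erase_mem_compression_singleton_self (hs : s ∈ 𝓒 {x} {a} F) (ha : a ∈ s)
    (hx : x ∉ s) : insert x (s.erase a) ∈ 𝓒 {x} {a} F := by
  rw [← UV.compress_singleton_of_notMem hx ha]
  exact UV.compress_mem_compression_of_mem_compression hs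

lemma insert_erase_mem_compression_singleton {y : α}
    (hF : ∀ s ∈ F, a ∈ s → y ∉ s → insert y (s.erase a) ∈ F)
    (hs : s ∈ 𝓒 {x} {a} F) (ha : a ∈ s) (hy : y ∉ s) : insert y (s.erase a) ∈ 𝓒 {x} {a} F := by
  have hsF : s ∈ F := UV.mem_of_mem_compression hs (singleton_subset_iff.2 ha) (by simp)
  have hay : a ∉ insert y (s.erase a) := by
    simp only [mem_insert, mem_erase, ne_eq, not_true_eq_false, false_and, or_false]
    exact fun h => hy (h ▸ ha)
  rw [← UV.compress_singleton_of_notMem_right (x := x) hay]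
  exact UV.compress_mem_compression (hF s hsF ha hy)

lemma compression_singleton_subset_powerset {G : Finset α} (hF : F ⊆ G.powerset) (hx : x ∈ G) :
    𝓒 {x} {a} F ⊆ G.powerset := by
  intro s hs
  rcases mem_or_exists_of_mem_compression_singleton hs with ⟨hs, -⟩ | ⟨b, hb, -, -, rfl⟩
  · exact hF hs
  · exact mem_powerset.2 (insert_subset hx ((erase_subset _ _).trans (mem_powerset.1 (hF hb))))

lemma exists_shifted {G : Finset α} (a : α) {S : Finset α} (hS : S ⊆ G) (hF : F ⊆ G.powerset)
    (hunion : ∀ s ∈ F, ∀ u ∈ F, #(s ∪ u) ≤ k) :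
    ∃ F' : Finset (Finset α), #F' = #F ∧ F' ⊆ G.powerset ∧ (∀ s ∈ F', ∀ u ∈ F', #(s ∪ u) ≤ k) ∧
      ∀ x ∈ S, ∀ s ∈ F', a ∈ s → x ∉ s → insert x (s.erase a) ∈ F' := by
  induction S using Finset.induction_on with
  | empty => exact ⟨F, rfl, hF, hunion, by simp⟩
  | insert x S _ ih =>
    obtain ⟨F', hcard, hF'G, hF', hshift⟩ := ih ((subset_insert x S).trans hS)
    refine ⟨𝓒 {x} {a} F', (UV.card_compression _ _ _).trans hcard,
      compression_singleton_subset_powerset hF'G (hS (mem_insert_self x S)),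
      card_union_le_of_mem_compression_singleton hF', ?_⟩
    intro y hy s hs ha hys
    rcases mem_insert.1 hy with rfl | hy
    · exact insert_erase_mem_compression_singleton_self hs ha hys
    · exact insert_erase_mem_compression_singleton (hshift y hy) hs ha hys

end Shifting

lemma sum_range_succ_choose_add_one (n t : ℕ) :
    ∑ i ∈ range (t + 1), (n + 1).choose i =
      ∑ i ∈ range (t + 1), n.choose i + ∑ i ∈ range t, n.choose i := by
  induction t with
  | zero => simp
  | succ t ih =>
    rw [sum_range_succ, ih, Nat.choose_succ_succ', sum_range_succ _ (t + 1), sum_range_succ _ t]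
    ring

section UnionBounded

variable {α : Type*} [DecidableEq α] {a : α} {G : Finset α} {F : Finset (Finset α)} {k : ℕ}

lemma two_mul_card_le_of_card_union_lt (hFG : F ⊆ G.powerset)
    (hF : ∀ s ∈ F, ∀ u ∈ F, #(s ∪ u) < #G) : 2 * #F ≤ 2 ^ #G := by
  have hinj : Set.InjOn (G \ ·) F := fun s hs u hu h => by
    rw [← Finset.sdiff_sdiff_eq_self (mem_powerset.1 (hFG hs)),
      ← Finset.sdiff_sdiff_eq_self (mem_powerset.1 (hFG hu))]
    exact congrArg (G \ ·) h
  have hdisj : Disjoint F (F.image (G \ ·)) := by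
    refine disjoint_left.2 fun s hs hs' => ?_
    obtain ⟨u, hu, rfl⟩ := mem_image.1 hs'
    have h := hF _ hs u hu
    rw [sdiff_union_of_subset (mem_powerset.1 (hFG hu))] at h
    exact lt_irrefl _ h
  calc 2 * #F = #(F ∪ F.image (G \ ·)) := by
        rw [card_union_of_disjoint hdisj, card_image_of_injOn hinj]; ring
    _ ≤ #G.powerset :=
        card_le_card (union_subset hFG (image_subset_iff.2 fun _ _ => mem_powerset.2 sdiff_subset))
    _ = 2 ^ #G := card_powerset G

lemma memberSubfamily_subset_powerset (hF : F ⊆ (insert a G).powerset) :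
    F.memberSubfamily a ⊆ G.powerset := by
  intro s hs
  rw [mem_memberSubfamily] at hs
  rw [mem_powerset, ← subset_insert_iff_of_notMem hs.2]
  exact (subset_insert a s).trans (mem_powerset.1 (hF hs.1))

lemma nonMemberSubfamily_subset_powerset (hF : F ⊆ (insert a G).powerset) :
    F.nonMemberSubfamily a ⊆ G.powerset := by
  intro s hs
  rw [mem_nonMemberSubfamily] at hs
  rw [mem_powerset, ← subset_insert_iff_of_notMem hs.2]
  exact mem_powerset.1 (hF hs.1)

lemma card_union_add_two_le_of_mem_memberSubfamily (ha : a ∉ G)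
    (hunion : ∀ s ∈ F, ∀ u ∈ F, #(s ∪ u) ≤ k) (hk : k ≤ #G)
    (hshift : ∀ x ∈ G, ∀ s ∈ F, a ∈ s → x ∉ s → insert x (s.erase a) ∈ F) :
    ∀ s ∈ F.memberSubfamily a, ∀ u ∈ F.memberSubfamily a, #(s ∪ u) + 2 ≤ k := by
  intro s hs u hu
  rw [mem_memberSubfamily] at hs hu
  have hau : a ∉ s ∪ u := by simp [hs.2, hu.2]
  have hlt : #(s ∪ u) < #G := by
    have h := hunion _ hs.1 _ hu.1
    rw [← insert_union_distrib, card_insert_of_notMem hau] at h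
    omega
  obtain ⟨x, hxG, hx⟩ := exists_mem_notMem_of_card_lt_card hlt
  have hxa : x ≠ a := fun h => ha (h ▸ hxG)
  have h := hunion _ (hshift x hxG _ hs.1 (mem_insert_self a s)
    (by simp [hxa, (not_or.1 (mem_union.not.1 hx)).1])) _ hu.1
  rwa [erase_insert hs.2, insert_union, union_insert, card_insert_of_notMem (by simp [hxa, hx]),
    card_insert_of_notMem hau] at h

theorem card_le_sum_choose_of_card_union_le {t : ℕ} (hFG : F ⊆ G.powerset)
    (hF : ∀ s ∈ F, ∀ u ∈ F, #(s ∪ u) ≤ 2 * t) (ht : 2 * t < #G) :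
    #F ≤ ∑ i ∈ range (t + 1), (#G).choose i := by
  induction G using Finset.induction_on generalizing t F with
  | empty => simp at ht
  | insert a G ha ih =>
    have hcard : #(insert a G) = #G + 1 := card_insert_of_notMem ha
    rw [hcard] at ht ⊢
    obtain hG | hG := (Nat.lt_succ_iff.1 ht).eq_or_lt
    · have h := two_mul_card_le_of_card_union_lt hFG fun s hs u hu => by
        have := hF s hs u hu; omega
      rw [hcard, ← hG, pow_succ, pow_mul] at h
      rw [← hG, Nat.sum_range_choose_halfway]
      norm_num at h
      omega
    obtain ⟨F', hF'card, hF'G, hF', hshift⟩ := exists_shifted a (subset_insert a G) hFG hF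
    have hmember := card_union_add_two_le_of_mem_memberSubfamily ha hF' hG.le hshift
    have hmember_card : #(F'.memberSubfamily a) ≤ ∑ i ∈ range t, (#G).choose i := by
      cases t with
      | zero =>
        simp only [range_zero, sum_empty, nonpos_iff_eq_zero, card_eq_zero]
        exact eq_empty_of_forall_notMem fun s hs => by have := hmember s hs s hs; omega
      | succ t =>
        exact ih (memberSubfamily_subset_powerset hF'G)
          (fun s hs u hu => by have := hmember s hs u hu; omega) (by omega)
    have hnonMember_card := ih (nonMemberSubfamily_subset_powerset hF'G)
      (fun s hs u hu => hF' s (mem_nonMemberSubfamily.1 hs).1 u (mem_nonMemberSubfamily.1 hu).1) hG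
    rw [← hF'card, ← card_memberSubfamily_add_card_nonMemberSubfamily a F',
      sum_range_succ_choose_add_one]
    omega

end UnionBounded

def trueSet {ι : Type*} [Fintype ι] (v : ι → Bool) : Finset ι := {i | v i = true}

lemma trueSet_injective {ι : Type*} [Fintype ι] : Function.Injective (trueSet (ι := ι)) := by
  intro u v h
  funext i
  have := congrArg (i ∈ ·) h
  simp only [trueSet, mem_filter_univ, eq_iff_iff] at this
  exact Bool.eq_iff_iff.2 this

lemma distB_eq_card_symmDiff_trueSet {d : ℕ} (u v : Fin d → Bool) :
    distB u v = #(trueSet u ∆ trueSet v) := by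
  rw [distB]
  congr 1
  ext i
  simp only [trueSet, mem_filter_univ, mem_symmDiff]
  cases u i <;> cases v i <;> simp

/-- Kleitman's theorem, even case. -/
theorem kleitman_even (d t : ℕ) (hd : 2 * t < d) (A : Finset (Fin d → Bool))
    (hA : ∀ u ∈ A, ∀ v ∈ A, distB u v ≤ 2 * t) :
    A.card ≤ ∑ i ∈ Finset.range (t + 1), d.choose i := by
  have hdiam : ∀ s ∈ A.image trueSet, ∀ u ∈ A.image trueSet, #(s ∆ u) ≤ 2 * t := by
    simp only [mem_image]
    rintro _ ⟨u, hu, rfl⟩ _ ⟨v, hv, rfl⟩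
    exact distB_eq_card_symmDiff_trueSet u v ▸ hA u hu v hv
  obtain ⟨B, hB, hBunion⟩ := exists_card_union_le_of_card_symmDiff_le hdiam
  rw [← card_image_of_injective A trueSet_injective, ← hB]
  simpa using card_le_sum_choose_of_card_union_le (G := univ)
    (fun s _ => mem_powerset.2 (subset_univ s)) hBunion (by simpa using hd)
end

section
/- If A is a set of vectors in {0,1}^d such that any two vectors in A have Hamming distance at most 2t+1, and d > 2t+1, then |A| ≤ 2·∑_{i=0}^{t} C(d-1,i). -/
/-!
Identify a vector with the set of its `true` coordinates, so that Hamming distance becomes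
`#(s ∆ r)`. Kleitman's down-compressions preserve the size and the diameter of the family and
turn it into a lower set `𝒟`; there `#(s ∪ r) = #(s ∆ (r \ s)) ≤ 2t + 1` for all members.
Split `𝒟` into levels. Level `0` has at most one set; level `t + 1` is intersecting, hence has at
most `C(n - 1, t)` members by Erdős–Ko–Rado; for `1 ≤ j ≤ t` levels `j` and `2t + 2 - j` together
have at most `C(n, j)` members, because the complements of level `2t + 2 - j` are
`(n - 2t - 2)`-intersecting and, by Katona's intersecting shadow theorem, their shadow at level `j`
is at least as large, while it is disjoint from level `j`. Summing gives
`∑_{j ≤ t} C(n, j) + C(n - 1, t) = 2 ∑_{j ≤ t} C(n - 1, j)`.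

Katona's theorem is proved by induction on the ground set `G`: if `#G ≤ 2a - t` the iterated
local LYM inequality suffices; otherwise compress the family away from a point `x`, after which
both the sets avoiding `x` and the links of `x` are `t`-intersecting on `G \ {x}`.
-/

open Finset
open scoped FinsetFamily symmDiff

namespace Nat

lemma choose_succ_le_choose {n k : ℕ} (h : n ≤ 2 * k + 1) : n.choose (k + 1) ≤ n.choose k :=
  Nat.le_of_mul_le_mul_right (c := k + 1)
    (by rw [choose_succ_right_eq]; exact Nat.mul_le_mul_left _ (by omega)) k.succ_pos

lemma choose_le_choose_of_le_of_le_add {n i j : ℕ} (hij : i ≤ j) (hn : n ≤ i + j) :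
    n.choose j ≤ n.choose i := by
  have antitone_from : ∀ m, n ≤ 2 * m → ∀ j, m ≤ j → n.choose j ≤ n.choose m := by
    intro m hm j hj
    induction j, hj using Nat.le_induction with
    | base => rfl
    | succ j hj ih => exact (choose_succ_le_choose (by omega)).trans ih
  rcases le_or_gt n (2 * i) with hi | hi
  · exact antitone_from i hi j hij
  · rw [← choose_symm (n := n) (k := i) (by omega)]
    exact antitone_from (n - i) (by omega) j (by omega)

lemma sum_range_succ_choose_add_choose (e t : ℕ) :
    ∑ i ∈ range (t + 1), (e + 1).choose i + e.choose t
      = 2 * ∑ i ∈ range (t + 1), e.choose i := by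
  induction t with
  | zero => simp
  | succ t ih =>
    rw [sum_range_succ, sum_range_succ (fun i => e.choose i), choose_succ_succ']
    omega

end Nat

namespace Finset

lemma sum_range_two_mul_add_two (f : ℕ → ℕ) (t : ℕ) :
    ∑ j ∈ range (2 * t + 2), f j
      = f 0 + f (t + 1) + ∑ i ∈ range t, (f (i + 1) + f (2 * t + 1 - i)) := by
  have upper : ∑ i ∈ range t, f (t + 2 + i) = ∑ i ∈ range t, f (2 * t + 1 - i) := by
    rw [← sum_range_reflect]
    exact sum_congr rfl fun i hi => by rw [mem_range] at hi; congr 1; omega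
  rw [show 2 * t + 2 = t + 2 + t by ring, sum_range_add, upper, sum_range_succ, sum_range_succ',
    sum_add_distrib]
  ring

variable {α : Type*} [DecidableEq α] {G : Finset α} {𝒜 : Finset (Finset α)} {a r t : ℕ}

lemma card_mul_le_card_shadow_mul_of_subset (hG : ∀ A ∈ 𝒜, A ⊆ G)
    (h𝒜 : (𝒜 : Set (Finset α)).Sized r) : #𝒜 * r ≤ #(∂ 𝒜) * (#G - r + 1) := by
  refine card_mul_le_card_mul' (· ⊆ ·) (fun A hA => ?_) (fun T hT => ?_)
  · rw [← h𝒜 hA, ← card_image_of_injOn A.erase_injOn]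
    refine card_le_card fun T hT => ?_
    obtain ⟨a, ha, rfl⟩ := mem_image.1 hT
    exact (mem_bipartiteBelow _).2 ⟨erase_mem_shadow hA ha, erase_subset _ _⟩
  · obtain ⟨A, hA, hTA, hcard⟩ := mem_shadow_iff_exists_mem_card_add_one.1 hT
    have hTG : T ⊆ G := hTA.trans (hG A hA)
    have hAG : #A ≤ #G := card_le_card (hG A hA)
    calc #(𝒜.bipartiteAbove (· ⊆ ·) T)
        ≤ #((G \ T).image (insert · T)) := card_le_card fun B hB => by
          obtain ⟨hB, hTB⟩ := (mem_bipartiteAbove _).1 hB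
          obtain ⟨b, hbT, rfl⟩ := exists_eq_insert_iff.2 ⟨hTB, by rw [h𝒜 hB, ← h𝒜 hA, hcard]⟩
          exact mem_image_of_mem _ (mem_sdiff.2 ⟨hG _ hB (mem_insert_self b T), hbT⟩)
      _ ≤ #(G \ T) := card_image_le
      _ = #G - r + 1 := by rw [card_sdiff_of_subset hTG, ← h𝒜 hA]; omega

lemma card_mul_choose_le_card_shadow_iterate_mul (hG : ∀ A ∈ 𝒜, A ⊆ G)
    (h𝒜 : (𝒜 : Set (Finset α)).Sized a) {k : ℕ} (hk : k ≤ a) :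
    #𝒜 * (#G).choose (a - k) ≤ #(∂^[k] 𝒜) * (#G).choose a := by
  induction k with
  | zero => simp
  | succ k ih =>
    obtain rfl | ⟨A, hA⟩ := 𝒜.eq_empty_or_nonempty
    · simp
    have haG : a ≤ #G := h𝒜 hA ▸ card_le_card (hG A hA)
    have hG' : ∀ B ∈ ∂^[k] 𝒜, B ⊆ G := fun B hB => by
      obtain ⟨A, hA, hBA, -⟩ := mem_shadow_iterate_iff_exists_sdiff.1 hB
      exact hBA.trans (hG A hA)
    have lym := card_mul_le_card_shadow_mul_of_subset hG' (h𝒜.shadow_iterate (k := k))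
    rw [← Function.iterate_succ_apply' shadow] at lym
    have pascal : (#G).choose (a - (k + 1)) * (#G - (a - k) + 1)
        = (#G).choose (a - k) * (a - k) := by
      have := Nat.choose_succ_right_eq (#G) (a - (k + 1))
      rwa [show a - (k + 1) + 1 = a - k by omega, show #G - (a - (k + 1)) = #G - (a - k) + 1 by
        omega, eq_comm] at this
    refine Nat.le_of_mul_le_mul_right (c := #G - (a - k) + 1) ?_ (by omega)
    calc #𝒜 * (#G).choose (a - (k + 1)) * (#G - (a - k) + 1)
        = #𝒜 * (#G).choose (a - k) * (a - k) := by rw [mul_assoc, pascal, mul_assoc]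
      _ ≤ #(∂^[k] 𝒜) * (#G).choose a * (a - k) := Nat.mul_le_mul_right _ (ih (by omega))
      _ = #(∂^[k] 𝒜) * (a - k) * (#G).choose a := by ring
      _ ≤ #(∂^[k + 1] 𝒜) * (#G - (a - k) + 1) * (#G).choose a := Nat.mul_le_mul_right _ lym
      _ = _ := by ring

lemma card_le_card_shadow_iterate_of_card_add_le (hG : ∀ A ∈ 𝒜, A ⊆ G)
    (h𝒜 : (𝒜 : Set (Finset α)).Sized a) (hta : t ≤ a) (hGa : #G + t ≤ 2 * a) :
    #𝒜 ≤ #(∂^[t] 𝒜) := by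
  obtain rfl | ⟨A, hA⟩ := 𝒜.eq_empty_or_nonempty
  · simp
  have haG : a ≤ #G := h𝒜 hA ▸ card_le_card (hG A hA)
  refine Nat.le_of_mul_le_mul_right (c := (#G).choose a) ?_ (Nat.choose_pos haG)
  calc #𝒜 * (#G).choose a ≤ #𝒜 * (#G).choose (a - t) :=
        Nat.mul_le_mul_left _ (Nat.choose_le_choose_of_le_of_le_add (by omega) (by omega))
    _ ≤ _ := card_mul_choose_le_card_shadow_iterate_mul hG h𝒜 hta

def IsTIntersecting (t : ℕ) (𝒜 : Finset (Finset α)) : Prop :=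
  ∀ A ∈ 𝒜, ∀ B ∈ 𝒜, t ≤ #(A ∩ B)

lemma IsTIntersecting.mono {ℬ : Finset (Finset α)} (h : IsTIntersecting t 𝒜)
    (hℬ : ℬ ⊆ 𝒜) : IsTIntersecting t ℬ :=
  fun A hA B hB => h A (hℬ hA) B (hℬ hB)

lemma card_le_card_insert_erase {i x : α} {P : Finset α} (hi : i ∉ P) :
    #P ≤ #(insert i (P.erase x)) := by
  rw [card_insert_of_notMem (fun h => hi (mem_of_mem_erase h))]
  have := pred_card_le_card_erase (s := P) (a := x)
  omega

end Finset

namespace UV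

variable {α : Type*} [DecidableEq α] {i x : α} {𝒜 : Finset (Finset α)}

lemma compress_singleton_s1 (i x : α) (A : Finset α) :
    compress {i} {x} A = if i ∉ A ∧ x ∈ A then insert i (A.erase x) else A := by
  unfold compress
  by_cases h : i ∉ A ∧ x ∈ A
  · rw [if_pos ⟨disjoint_singleton_left.2 h.1, singleton_subset_iff.2 h.2⟩, if_pos h]
    grind
  · rw [if_neg (by simpa [disjoint_singleton_left] using h), if_neg h]

lemma mem_compression_singleton {C : Finset α} :
    C ∈ 𝓒 {i} {x} 𝒜 ↔ (C ∈ 𝒜 ∧ compress {i} {x} C ∈ 𝒜) ∨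
      (C ∉ 𝒜 ∧ ∃ B ∈ 𝒜, i ∉ B ∧ x ∈ B ∧ C = insert i (B.erase x)) := by
  rw [mem_compression]
  refine or_congr_right ⟨fun ⟨hC, B, hB, hBC⟩ => ⟨hC, B, hB, ?_⟩,
    fun ⟨hC, B, hB, hiB, hxB, hBC⟩ => ⟨hC, B, hB, by rw [compress_singleton_s1, if_pos ⟨hiB, hxB⟩,
      hBC]⟩⟩
  rw [compress_singleton_s1] at hBC
  split_ifs at hBC with h
  · exact ⟨h.1, h.2, hBC.symm⟩
  · exact absurd (hBC ▸ hB) hC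

lemma _root_.Finset.IsTIntersecting.compression_singleton {t : ℕ} (h : IsTIntersecting t 𝒜) :
    IsTIntersecting t (𝓒 {i} {x} 𝒜) := by
  have moved_moved : ∀ A ∈ 𝒜, ∀ B ∈ 𝒜, i ∉ A →
      t ≤ #(insert i (A.erase x) ∩ insert i (B.erase x)) := fun A hA B hB hiA => by
    rw [show insert i (A.erase x) ∩ insert i (B.erase x) = insert i ((A ∩ B).erase x) by grind]
    exact (h A hA B hB).trans (card_le_card_insert_erase fun hi => hiA (mem_inter.1 hi).1)
  have moved_kept : ∀ A ∈ 𝒜, ∀ B ∈ 𝒜, i ∉ A → x ∈ A → compress {i} {x} B ∈ 𝒜 →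
      t ≤ #(insert i (A.erase x) ∩ B) := fun A hA B hB hiA hxA hcB => by
    rw [compress_singleton_s1] at hcB
    split_ifs at hcB with hB'
    · have key : insert i (A.erase x) ∩ B = A ∩ insert i (B.erase x) := by grind
      exact key ▸ h A hA _ hcB
    · refine (h A hA B hB).trans ?_
      rcases not_and_or.1 hB' with hiB | hxB
      · rw [not_not] at hiB
        rw [insert_inter_of_mem hiB, erase_inter]
        exact card_le_card_insert_erase fun hi => hiA (mem_inter.1 hi).1
      · exact card_le_card fun y hy => by grind
  intro A hA B hB
  rcases mem_compression_singleton.1 hA with ⟨hA, hcA⟩ | ⟨-, A, hA', hiA, hxA, rfl⟩ <;>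
    rcases mem_compression_singleton.1 hB with ⟨hB, hcB⟩ | ⟨-, B, hB', hiB, hxB, rfl⟩
  · exact h A hA B hB
  · exact inter_comm A _ ▸ moved_kept B hB' A hA hiB hxB hcA
  · exact moved_kept A hA' B hB hiA hxA hcB
  · exact moved_moved A hA' B hB' hiA

lemma card_shadow_iterate_compression_singleton_le (i x : α) (k : ℕ) (𝒜 : Finset (Finset α)) :
    #(∂^[k] (𝓒 {i} {x} 𝒜)) ≤ #(∂^[k] 𝒜) := by
  induction k generalizing 𝒜 with
  | zero => exact (card_compression _ _ _).le
  | succ k ih =>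
    have hsub : ∂ (𝓒 {i} {x} 𝒜) ⊆ 𝓒 {i} {x} (∂ 𝒜) :=
      shadow_compression_subset_compression_shadow _ _ fun y hy => ⟨x, mem_singleton_self x, by
        rw [mem_singleton.1 hy, erase_singleton, erase_singleton]; exact isCompressed_self _ _⟩
    rw [Function.iterate_succ_apply, Function.iterate_succ_apply]
    exact (card_le_card (shadow_monotone.iterate k hsub)).trans (ih _)

lemma subset_of_mem_compression_singleton {G : Finset α} (hi : i ∈ G) (hG : ∀ A ∈ 𝒜, A ⊆ G) :
    ∀ B ∈ 𝓒 {i} {x} 𝒜, B ⊆ G := fun B hB => by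
  rcases mem_compression_singleton.1 hB with ⟨hB, -⟩ | ⟨-, A, hA, -, -, rfl⟩
  · exact hG B hB
  · exact insert_subset hi ((erase_subset _ _).trans (hG A hA))

lemma isCompressed_of_forall_compress_mem {u v : Finset α}
    (h : ∀ A ∈ 𝒜, compress u v A ∈ 𝒜) : IsCompressed u v 𝒜 := by
  ext C
  rw [mem_compression]
  exact ⟨by rintro (⟨hC, -⟩ | ⟨-, B, hB, rfl⟩) <;> [exact hC; exact h B hB],
    fun hC => Or.inl ⟨hC, h C hC⟩⟩

lemma card_filter_mem_compression_singleton_lt (h : ¬ IsCompressed {i} {x} 𝒜) :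
    #{C ∈ 𝓒 {i} {x} 𝒜 | x ∈ C} < #{A ∈ 𝒜 | x ∈ A} := by
  obtain ⟨B, hB, hcB⟩ : ∃ B ∈ 𝒜, compress {i} {x} B ∉ 𝒜 := by
    by_contra! hall
    exact h (isCompressed_of_forall_compress_mem hall)
  have hxB : x ∈ B := by
    by_contra hxB
    rw [compress_singleton_s1, if_neg (by tauto)] at hcB
    exact hcB hB
  refine card_lt_card ⟨fun C hC => ?_, fun hsub => ?_⟩
  · rw [mem_filter] at hC ⊢
    rcases mem_compression_singleton.1 hC.1 with ⟨hC', -⟩ | ⟨-, A, -, -, -, rfl⟩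
    · exact ⟨hC', hC.2⟩
    · grind
  · rcases mem_compression_singleton.1 (mem_filter.1 (hsub (mem_filter.2 ⟨hB, hxB⟩))).1 with
      ⟨-, h'⟩ | ⟨hB', -⟩
    · exact hcB h'
    · exact hB' hB

lemma exists_forall_isCompressed_singleton (G : Finset α) (x : α)
    (P : Finset (Finset α) → Prop) (hP : ∀ i ∈ G, ∀ ℬ, P ℬ → P (𝓒 {i} {x} ℬ))
    (h𝒜 : P 𝒜) : ∃ ℬ, P ℬ ∧ ∀ i ∈ G, IsCompressed {i} {x} ℬ := by
  induction hN : #{A ∈ 𝒜 | x ∈ A} using Nat.strong_induction_on generalizing 𝒜 with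
  | _ N ih =>
    by_cases hc : ∀ i ∈ G, IsCompressed {i} {x} 𝒜
    · exact ⟨𝒜, h𝒜, hc⟩
    push Not at hc
    obtain ⟨i, hi, hnc⟩ := hc
    exact ih _ (hN ▸ card_filter_mem_compression_singleton_lt hnc) (hP i hi _ h𝒜) rfl

end UV

namespace Finset

section

variable {α : Type*} [DecidableEq α] {x : α} {𝒜 : Finset (Finset α)}

lemma shadow_iterate_nonMemberSubfamily_subset (k : ℕ) :
    ∂^[k] (𝒜.nonMemberSubfamily x) ⊆ (∂^[k] 𝒜).nonMemberSubfamily x := fun S hS => by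
  obtain ⟨B, hB, hSB, -⟩ := mem_shadow_iterate_iff_exists_sdiff.1 hS
  rw [mem_nonMemberSubfamily] at hB ⊢
  exact ⟨shadow_monotone.iterate k (filter_subset _ _) hS, fun hx => hB.2 (hSB hx)⟩

lemma shadow_iterate_memberSubfamily_subset (k : ℕ) :
    ∂^[k] (𝒜.memberSubfamily x) ⊆ (∂^[k] 𝒜).memberSubfamily x := fun S hS => by
  obtain ⟨B, hB, hSB, hk⟩ := mem_shadow_iterate_iff_exists_sdiff.1 hS
  rw [mem_memberSubfamily] at hB ⊢
  have hxS : x ∉ S := fun hx => hB.2 (hSB hx)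
  refine ⟨mem_shadow_iterate_iff_exists_sdiff.2 ⟨_, hB.1, insert_subset_insert x hSB, ?_⟩, hxS⟩
  rw [insert_sdiff_insert, sdiff_insert, erase_eq_of_notMem (fun h => hB.2 (mem_sdiff.1 h).1), hk]

lemma card_shadow_iterate_memberSubfamily_add_card_shadow_iterate_nonMemberSubfamily_le (k : ℕ) :
    #(∂^[k] (𝒜.memberSubfamily x)) + #(∂^[k] (𝒜.nonMemberSubfamily x)) ≤ #(∂^[k] 𝒜) := by
  rw [← card_memberSubfamily_add_card_nonMemberSubfamily x (∂^[k] 𝒜)]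
  exact add_le_add (card_le_card (shadow_iterate_memberSubfamily_subset k))
    (card_le_card (shadow_iterate_nonMemberSubfamily_subset k))

variable {G : Finset α} {a t : ℕ}

/-- If `A ∪ {x}` and `B ∪ {x}` are in a family compressed away from `x` and `A ∩ B` were too
small, a point of `G` outside `A ∪ B ∪ {x}` (which exists since `G` is large) could replace `x`
in `A`, and the resulting member would meet `B ∪ {x}` in `A ∩ B` only. -/
lemma IsTIntersecting.memberSubfamily (hG : ∀ A ∈ 𝒜, A ⊆ G)
    (h𝒜 : (𝒜 : Set (Finset α)).Sized a) (ht : IsTIntersecting t 𝒜)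
    (hshift : ∀ i ∈ G, UV.IsCompressed {i} {x} 𝒜) (hx : x ∈ G) (hGa : 2 * a < #G + t) :
    IsTIntersecting t (𝒜.memberSubfamily x) := by
  intro A hA B hB
  rw [mem_memberSubfamily] at hA hB
  by_contra! hAB
  have hxAB : t ≤ #(A ∩ B) + 1 := by
    have := ht _ hA.1 _ hB.1
    rwa [← insert_inter_distrib, card_insert_of_notMem fun h => hA.2 (mem_inter.1 h).1] at this
  have hsizes : #A + 1 = a ∧ #B + 1 = a := by
    have hA' := h𝒜 hA.1
    have hB' := h𝒜 hB.1
    rw [card_insert_of_notMem hA.2] at hA'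
    rw [card_insert_of_notMem hB.2] at hB'
    exact ⟨hA', hB'⟩
  obtain ⟨i, hi⟩ : ((G.erase x) \ (A ∪ B)).Nonempty := by
    have hsub : A ∪ B ⊆ G.erase x := union_subset
      (fun y hy => mem_erase.2 ⟨fun h => hA.2 (h ▸ hy), hG _ hA.1 (mem_insert_of_mem hy)⟩)
      (fun y hy => mem_erase.2 ⟨fun h => hB.2 (h ▸ hy), hG _ hB.1 (mem_insert_of_mem hy)⟩)
    rw [← card_pos, card_sdiff_of_subset hsub, card_erase_of_mem hx]
    have := card_union_add_card_inter A B
    omega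
  have hiA : insert i A ∈ 𝒜 := by
    have := UV.compress_mem_compression (u := {i}) (v := {x}) hA.1
    rwa [hshift i (mem_erase.1 (mem_sdiff.1 hi).1).2, UV.compress_singleton_s1, if_pos (by grind),
      erase_insert hA.2] at this
  have key : insert i A ∩ insert x B = A ∩ B := by grind
  exact absurd (key ▸ ht _ hiA _ hB.1) (not_le.2 hAB)

lemma subset_erase_of_mem_nonMemberSubfamily (hG : ∀ A ∈ 𝒜, A ⊆ G) :
    ∀ B ∈ 𝒜.nonMemberSubfamily x, B ⊆ G.erase x := fun B hB y hy => by
  rw [mem_nonMemberSubfamily] at hB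
  exact mem_erase.2 ⟨fun h => hB.2 (h ▸ hy), hG B hB.1 hy⟩

lemma subset_erase_of_mem_memberSubfamily (hG : ∀ A ∈ 𝒜, A ⊆ G) :
    ∀ B ∈ 𝒜.memberSubfamily x, B ⊆ G.erase x := fun B hB y hy => by
  rw [mem_memberSubfamily] at hB
  exact mem_erase.2 ⟨fun h => hB.2 (h ▸ hy), hG _ hB.1 (mem_insert_of_mem hy)⟩

lemma _root_.Set.Sized.nonMemberSubfamily (h𝒜 : (𝒜 : Set (Finset α)).Sized a) :
    (𝒜.nonMemberSubfamily x : Set (Finset α)).Sized a :=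
  fun _ hB => h𝒜 (mem_nonMemberSubfamily.1 hB).1

lemma _root_.Set.Sized.memberSubfamily (h𝒜 : (𝒜 : Set (Finset α)).Sized a) :
    (𝒜.memberSubfamily x : Set (Finset α)).Sized (a - 1) := fun B hB => by
  rw [mem_coe, mem_memberSubfamily] at hB
  have := h𝒜 hB.1
  rw [card_insert_of_notMem hB.2] at this
  omega

/-- **Katona's intersecting shadow theorem**. -/
theorem IsTIntersecting.card_le_card_shadow_iterate (hG : ∀ A ∈ 𝒜, A ⊆ G)
    (h𝒜 : (𝒜 : Set (Finset α)).Sized a) (ht : IsTIntersecting t 𝒜) : #𝒜 ≤ #(∂^[t] 𝒜) := by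
  induction G using Finset.strongInduction generalizing a t 𝒜 with
  | H G ih =>
  obtain rfl | ⟨A, hA⟩ := 𝒜.eq_empty_or_nonempty
  · simp
  have hta : t ≤ a := h𝒜 hA ▸ inter_self A ▸ ht A hA A hA
  by_cases hsmall : #G + t ≤ 2 * a
  · exact card_le_card_shadow_iterate_of_card_add_le hG h𝒜 hta hsmall
  obtain ⟨x, hx⟩ : G.Nonempty := card_pos.1 (by omega)
  obtain ⟨ℬ, ⟨hcard, hℬG, hℬ, hℬt, hshadow⟩, hshift⟩ := UV.exists_forall_isCompressed_singleton G x
    (fun ℬ => #ℬ = #𝒜 ∧ (∀ B ∈ ℬ, B ⊆ G) ∧ (ℬ : Set (Finset α)).Sized a ∧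
      IsTIntersecting t ℬ ∧ #(∂^[t] ℬ) ≤ #(∂^[t] 𝒜))
    (fun i hi ℬ ⟨hcard, hℬG, hℬ, hℬt, hshadow⟩ =>
      ⟨(UV.card_compression _ _ _).trans hcard, UV.subset_of_mem_compression_singleton hi hℬG,
        hℬ.uvCompression (by simp), hℬt.compression_singleton,
        (UV.card_shadow_iterate_compression_singleton_le i x t ℬ).trans hshadow⟩)
    ⟨rfl, hG, h𝒜, ht, le_rfl⟩
  calc #𝒜 = #(ℬ.memberSubfamily x) + #(ℬ.nonMemberSubfamily x) := by
        rw [card_memberSubfamily_add_card_nonMemberSubfamily, hcard]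
    _ ≤ #(∂^[t] (ℬ.memberSubfamily x)) + #(∂^[t] (ℬ.nonMemberSubfamily x)) := add_le_add
        (ih _ (erase_ssubset hx) (subset_erase_of_mem_memberSubfamily hℬG) hℬ.memberSubfamily
          (hℬt.memberSubfamily hℬG hℬ hshift hx (by omega)))
        (ih _ (erase_ssubset hx) (subset_erase_of_mem_nonMemberSubfamily hℬG)
          hℬ.nonMemberSubfamily (hℬt.mono (filter_subset _ _)))
    _ ≤ #(∂^[t] ℬ) :=
        card_shadow_iterate_memberSubfamily_add_card_shadow_iterate_nonMemberSubfamily_le t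
    _ ≤ #(∂^[t] 𝒜) := hshadow

end

section

variable {α : Type*} [DecidableEq α] {D : ℕ} {𝒜 : Finset (Finset α)}

def DiamLE (D : ℕ) (𝒜 : Finset (Finset α)) : Prop :=
  ∀ s ∈ 𝒜, ∀ r ∈ 𝒜, #(s ∆ r) ≤ D

lemma DiamLE.downCompression (a : α) (h : DiamLE D 𝒜) : DiamLE D (𝓓 a 𝒜) := by
  have new_old : ∀ s ∉ 𝒜, insert a s ∈ 𝒜 → ∀ r ∈ 𝒜, r.erase a ∈ 𝒜 → #(s ∆ r) ≤ D := by
    intro s hs hs' r hr hr'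
    have has : a ∉ s := fun ha => hs (insert_eq_of_mem ha ▸ hs')
    by_cases har : a ∈ r
    · rw [show s ∆ r = insert a s ∆ r.erase a by ext; simp only [mem_symmDiff]; grind]
      exact h _ hs' _ hr'
    · exact (card_le_card fun y => by simp only [mem_symmDiff]; grind).trans (h _ hs' _ hr)
  intro s hs r hr
  rcases Down.mem_compression.1 hs with ⟨hs, hs'⟩ | ⟨hs, hs'⟩ <;>
    rcases Down.mem_compression.1 hr with ⟨hr, hr'⟩ | ⟨hr, hr'⟩
  · exact h s hs r hr
  · exact symmDiff_comm s r ▸ new_old r hr hr' s hs hs'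
  · exact new_old s hs hs' r hr hr'
  · have has : a ∉ s := fun ha => hs (insert_eq_of_mem ha ▸ hs')
    have har : a ∉ r := fun ha => hr (insert_eq_of_mem ha ▸ hr')
    rw [show s ∆ r = insert a s ∆ insert a r by ext; simp only [mem_symmDiff]; grind]
    exact h _ hs' _ hr'

lemma Down.erase_mem_compression_of_forall_erase_mem (a : α) {b : α}
    (h : ∀ s ∈ 𝒜, s.erase b ∈ 𝒜) : ∀ s ∈ 𝓓 a 𝒜, s.erase b ∈ 𝓓 a 𝒜 := by
  intro s hs
  rcases Down.mem_compression.1 hs with ⟨hs, hsa⟩ | ⟨hs, hs'⟩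
  · exact Down.mem_compression.2 (Or.inl ⟨h s hs, erase_right_comm (a := a) ▸ h _ hsa⟩)
  have has : a ∉ s := fun ha => hs (insert_eq_of_mem ha ▸ hs')
  obtain rfl | hab := eq_or_ne a b
  · rwa [erase_eq_of_notMem has]
  have hins : insert a (s.erase b) ∈ 𝒜 := erase_insert_of_ne hab ▸ h _ hs'
  by_cases hsb : s.erase b ∈ 𝒜
  · exact Down.mem_compression.2
      (Or.inl ⟨hsb, by rwa [erase_eq_of_notMem fun ha => has (mem_of_mem_erase ha)]⟩)
  · exact Down.mem_compression.2 (Or.inr ⟨hsb, hins⟩)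

lemma isLowerSet_of_forall_erase_mem (h : ∀ s ∈ 𝒜, ∀ a, s.erase a ∈ 𝒜) :
    IsLowerSet (𝒜 : Set (Finset α)) := by
  have sdiff_mem : ∀ u s, s ∈ 𝒜 → s \ u ∈ 𝒜 := by
    intro u
    induction u using Finset.induction_on with
    | empty => simp
    | insert a u _ ih => exact fun s hs => sdiff_insert s u a ▸ h _ (ih s hs) a
  intro s r hrs hs
  exact sdiff_sdiff_eq_self hrs ▸ sdiff_mem (s \ r) s hs

/-- Applying each down-compression `𝓓 a` once yields a lower set, since `𝓓 a` keeps closure under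
every `erase b`. -/
lemma DiamLE.exists_isLowerSet [Fintype α] (h : DiamLE D 𝒜) :
    ∃ 𝒟 : Finset (Finset α), #𝒟 = #𝒜 ∧ DiamLE D 𝒟 ∧ IsLowerSet (𝒟 : Set (Finset α)) := by
  have closed_under : ∀ S : Finset α, ∃ 𝒟 : Finset (Finset α), #𝒟 = #𝒜 ∧ DiamLE D 𝒟 ∧
      ∀ b ∈ S, ∀ s ∈ 𝒟, s.erase b ∈ 𝒟 := by
    intro S
    induction S using Finset.induction_on with
    | empty => exact ⟨𝒜, rfl, h, by simp⟩
    | insert a S _ ih =>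
      obtain ⟨𝒟, hcard, h𝒟, hS⟩ := ih
      refine ⟨𝓓 a 𝒟, (Down.card_compression a 𝒟).trans hcard, h𝒟.downCompression a, ?_⟩
      rintro b hb
      rcases mem_insert.1 hb with rfl | hb
      · exact fun s => Down.erase_mem_compression_of_mem_compression
      · exact Down.erase_mem_compression_of_forall_erase_mem a (hS b hb)
  obtain ⟨𝒟, hcard, h𝒟, hclosed⟩ := closed_under univ
  exact ⟨𝒟, hcard, h𝒟, isLowerSet_of_forall_erase_mem fun s hs b => hclosed b (mem_univ b) s hs⟩

lemma DiamLE.card_union_le (h : DiamLE D 𝒜) (h𝒜 : IsLowerSet (𝒜 : Set (Finset α))) :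
    ∀ s ∈ 𝒜, ∀ r ∈ 𝒜, #(s ∪ r) ≤ D := fun s hs r hr => by
  have hrs : r \ s ∈ 𝒜 := h𝒜 sdiff_subset hr
  rw [show s ∪ r = s ∆ (r \ s) by ext; simp only [mem_symmDiff]; grind]
  exact h s hs _ hrs

end

section

variable {n D : ℕ} {𝒟 : Finset (Finset (Fin n))}

/-- The complements of the `k`-sets of `𝒟` are `(n - D - 1)`-intersecting, so by Katona their
shadow at level `j` is at least as large as `𝒟 # k`; it is disjoint from `𝒟 # j` because a
`j`-subset of the complement of a `k`-set `Y` has union `j + k > D` with `Y`. -/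
lemma card_slice_add_card_slice_le (hU : ∀ s ∈ 𝒟, ∀ r ∈ 𝒟, #(s ∪ r) ≤ D) (hD : D < n)
    {j k : ℕ} (hjk : j + k = D + 1) : #(𝒟 # j) + #(𝒟 # k) ≤ n.choose j := by
  set 𝒞 := (𝒟 # k)ᶜˢ
  have h𝒞 : (𝒞 : Set (Finset (Fin n))).Sized (n - k) := by
    simpa only [Fintype.card_fin] using (sized_slice (𝒜 := 𝒟) (r := k)).compls
  have h𝒞t : IsTIntersecting (n - D - 1) 𝒞 := fun X hX Y hY => by
    rw [mem_compls] at hX hY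
    have hunion := hU _ (mem_slice.1 hX).1 _ (mem_slice.1 hY).1
    have hcompl := card_compl (X ∩ Y)
    rw [compl_inter, Fintype.card_fin] at hcompl
    have := card_le_univ (X ∩ Y)
    rw [Fintype.card_fin] at this
    omega
  have hshadow : (∂^[n - D - 1] 𝒞 : Set (Finset (Fin n))).Sized j := by
    simpa [show n - k - (n - D - 1) = j by omega] using h𝒞.shadow_iterate (k := n - D - 1)
  have hdisj : Disjoint (𝒟 # j) (∂^[n - D - 1] 𝒞) := disjoint_left.2 fun X hX hX' => by
    obtain ⟨Yc, hYc, hXY, -⟩ := mem_shadow_iterate_iff_exists_sdiff.1 hX'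
    rw [mem_compls] at hYc
    have hunion := hU X (mem_slice.1 hX).1 _ (mem_slice.1 hYc).1
    rw [card_union_of_disjoint (disjoint_compl_right.mono_left hXY), (mem_slice.1 hX).2,
      (mem_slice.1 hYc).2] at hunion
    omega
  calc #(𝒟 # j) + #(𝒟 # k) = #(𝒟 # j) + #𝒞 := by rw [card_compls]
    _ ≤ #(𝒟 # j) + #(∂^[n - D - 1] 𝒞) := Nat.add_le_add_left
        (h𝒞t.card_le_card_shadow_iterate (G := univ) (fun _ _ => subset_univ _) h𝒞) _
    _ = #(𝒟 # j ∪ ∂^[n - D - 1] 𝒞) := (card_union_of_disjoint hdisj).symm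
    _ ≤ n.choose j := by
        have hsized : ((𝒟 # j ∪ ∂^[n - D - 1] 𝒞 : Finset _) : Set (Finset (Fin n))).Sized j := by
          rw [coe_union]
          exact Set.sized_union.2 ⟨sized_slice, hshadow⟩
        simpa using hsized.card_le

lemma card_slice_succ_le_of_card_union_le {t : ℕ}
    (hU : ∀ s ∈ 𝒟, ∀ r ∈ 𝒟, #(s ∪ r) ≤ 2 * t + 1) (hn : 2 * t + 1 < n) :
    #(𝒟 # (t + 1)) ≤ (n - 1).choose t := by
  have hint : ((𝒟 # (t + 1) : Finset _) : Set (Finset (Fin n))).Intersecting :=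
    fun s hs r hr hsr => by
      have := hU s (mem_slice.1 hs).1 r (mem_slice.1 hr).1
      rw [card_union_of_disjoint hsr, (mem_slice.1 hs).2, (mem_slice.1 hr).2] at this
      omega
  simpa using erdos_ko_rado hint sized_slice (by omega)

theorem card_le_of_forall_card_union_le {t : ℕ}
    (hU : ∀ s ∈ 𝒟, ∀ r ∈ 𝒟, #(s ∪ r) ≤ 2 * t + 1) (hn : 2 * t + 1 < n) :
    #𝒟 ≤ 2 * ∑ i ∈ range (t + 1), (n - 1).choose i := by
  have hlevels : #𝒟 = ∑ j ∈ range (2 * t + 2), #(𝒟 # j) :=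
    card_eq_sum_card_fiberwise fun s hs => by
      simpa [Nat.lt_succ_iff] using union_self s ▸ hU s hs s hs
  have h₀ : #(𝒟 # 0) ≤ 1 := by simpa using (sized_slice (𝒜 := 𝒟) (r := 0)).card_le
  have hpairs : ∑ i ∈ range t, (#(𝒟 # (i + 1)) + #(𝒟 # (2 * t + 1 - i)))
      ≤ ∑ i ∈ range t, n.choose (i + 1) :=
    sum_le_sum fun i hi => card_slice_add_card_slice_le hU hn (by rw [mem_range] at hi; omega)
  obtain ⟨m, rfl⟩ : ∃ m, n = m + 1 := ⟨n - 1, by omega⟩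
  have hbinom := Nat.sum_range_succ_choose_add_choose m t
  rw [sum_range_succ'] at hbinom
  rw [hlevels, sum_range_two_mul_add_two]
  have := card_slice_succ_le_of_card_union_le hU hn
  simp only [Nat.choose_zero_right, Nat.add_sub_cancel] at hbinom this ⊢
  omega

theorem DiamLE.card_le {t : ℕ} {𝒜 : Finset (Finset (Fin n))} (h : DiamLE (2 * t + 1) 𝒜)
    (hn : 2 * t + 1 < n) : #𝒜 ≤ 2 * ∑ i ∈ range (t + 1), (n - 1).choose i := by
  obtain ⟨𝒟, hcard, h𝒟, hlower⟩ := h.exists_isLowerSet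
  exact hcard ▸ card_le_of_forall_card_union_le (h𝒟.card_union_le hlower) hn

end

end Finset

def boolSupport {ι : Type*} [Fintype ι] (v : ι → Bool) : Finset ι := {i | v i = true}

lemma boolSupport_injective {ι : Type*} [Fintype ι] :
    Function.Injective (boolSupport : (ι → Bool) → Finset ι) := fun u v huv => by
  funext i
  have := congrArg (i ∈ ·) huv
  simp only [boolSupport, mem_filter, mem_univ, true_and, eq_iff_iff] at this
  cases hu : u i <;> cases hv : v i <;> simp_all

lemma distB_eq_card_symmDiff {d : ℕ} (u v : Fin d → Bool) :
    distB u v = #(boolSupport u ∆ boolSupport v) := by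
  unfold distB boolSupport
  congr 1
  ext i
  simp only [mem_symmDiff, mem_filter, mem_univ, true_and]
  cases u i <;> cases v i <;> simp

/-- Kleitman's theorem, odd case. -/
theorem kleitman_odd (d t : ℕ) (hd : 2 * t + 1 < d) (A : Finset (Fin d → Bool))
    (hA : ∀ u ∈ A, ∀ v ∈ A, distB u v ≤ 2 * t + 1) :
    A.card ≤ 2 * ∑ i ∈ Finset.range (t + 1), (d - 1).choose i := by
  have hdiam : DiamLE (2 * t + 1) (A.image boolSupport) := by
    simp only [DiamLE, forall_mem_image]
    exact fun u hu v hv => distB_eq_card_symmDiff u v ▸ hA u hu v hv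
  rw [← card_image_of_injective A boolSupport_injective]
  exact hdiam.card_le hd
end

section
/- Let U ⊆ {0,1,*}^d be such that for any two distinct u, u' ∈ U, the number of coordinates where u and u' take distinct values in {0,1} (ignoring coordinates where either has a *) is between 1 and k. For u ∈ U, let j(u) denote the number of * coordinates of u. If v ∈ {0,1}^d is covered by u₁ ∈ U and the complementary vector 1−v is covered by u₂ ∈ U, then j(u₁) + j(u₂) ≥ d − k. -/
theorem distS_self {d : ℕ} (u : Fin d → Option Bool) : distS u u = 0 := by
  simp only [distS, Finset.card_eq_zero, Finset.filter_eq_empty_iff]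
  rintro i - ⟨a, b, ha, hb, hab⟩
  exact hab (Option.some_injective _ (ha.symm.trans hb))

theorem differ_or_joker_or_joker_of_covers {d : ℕ} {u u' : Fin d → Option Bool}
    {v : Fin d → Bool} (hc : covers u v) (hc' : covers u' (fun i => !v i)) (i : Fin d) :
    (∃ a b : Bool, u i = some a ∧ u' i = some b ∧ a ≠ b) ∨ u i = none ∨ u' i = none := by
  rcases ha : u i with _ | a
  · exact .inr (.inl rfl)
  rcases hb : u' i with _ | b
  · exact .inr (.inr rfl)
  refine .inl ⟨a, b, rfl, rfl, ?_⟩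
  rintro rfl
  have hva : v i = a := hc i a ha
  have hvb : (!v i) = a := hc' i a hb
  simp [hva] at hvb

theorem le_distS_add_jokers_of_covers {d : ℕ} {u u' : Fin d → Option Bool}
    {v : Fin d → Bool} (hc : covers u v) (hc' : covers u' (fun i => !v i)) :
    d ≤ distS u u' + (jokers u + jokers u') := by
  have hcover : (Finset.univ : Finset (Fin d)) ⊆
      Finset.univ.filter (fun i => ∃ a b : Bool, u i = some a ∧ u' i = some b ∧ a ≠ b) ∪
        (Finset.univ.filter (fun i => u i = none) ∪ Finset.univ.filter (fun i => u' i = none)) := by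
    intro i _
    simpa only [Finset.mem_union, Finset.mem_filter, Finset.mem_univ, true_and]
      using differ_or_joker_or_joker_of_covers hc hc' i
  calc d = (Finset.univ : Finset (Fin d)).card := (Finset.card_fin d).symm
    _ ≤ _ := Finset.card_le_card hcover
    _ ≤ _ := (Finset.card_union_le _ _).trans (Nat.add_le_add_left (Finset.card_union_le _ _) _)

/-- If v is covered by u₁ and its complement by u₂, then j(u₁)+j(u₂) ≥ d−k. -/
theorem jokers_sum_lower (d k : ℕ) (U : Set (Fin d → Option Bool))
    (hU : ∀ u ∈ U, ∀ u' ∈ U, u ≠ u' → 1 ≤ distS u u' ∧ distS u u' ≤ k)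
    (v : Fin d → Bool) (u₁ u₂ : Fin d → Option Bool)
    (h₁ : u₁ ∈ U) (h₂ : u₂ ∈ U)
    (hc₁ : covers u₁ v) (hc₂ : covers u₂ (fun i => ! v i)) :
    d - k ≤ jokers u₁ + jokers u₂ := by
  have hcount := le_distS_add_jokers_of_covers hc₁ hc₂
  by_cases h : u₁ = u₂
  · subst h
    rw [distS_self] at hcount
    omega
  · have hk := (hU u₁ h₁ u₂ h₂ h).2
    omega
end

section
/- Let U ⊆ {0,1,*}^d with pairwise Hamming distances (counting only coordinates where both entries lie in {0,1} and differ) in {1,...,k}. For each t ≥ 0 let V^(t) be the set of v ∈ {0,1}^d covered by some u ∈ U having exactly t joker (*) coordinates, and let the complement set of V^(t) be {1−v : v ∈ V^(t)}. Then for any nonnegative integers a, b with a + b < d − k, the sets V^(a) and {1−v : v ∈ V^(b)} are disjoint. -/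
/-- V^(a) and the complement image of V^(b) are disjoint when a + b < d − k. -/
theorem V_disjoint (d k : ℕ) (U : Set (Fin d → Option Bool))
    (hU : ∀ u ∈ U, ∀ u' ∈ U, u ≠ u' → 1 ≤ distS u u' ∧ distS u u' ≤ k)
    (a b : ℕ) (hab : a + b < d - k) (v : Fin d → Bool)
    (hva : ∃ u ∈ U, jokers u = a ∧ covers u v) :
    ¬ ∃ u ∈ U, jokers u = b ∧ covers u (fun i => ! v i) := by
  rintro ⟨u', hu'U, hb, hcov'⟩
  obtain ⟨u, huU, ha, hcov⟩ := hva
  -- key lower bound: distS u u' ≥ d - a - b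
  have hkey : d - a - b ≤ distS u u' := by
    have hsub : Finset.univ.filter (fun i => ¬ (u i = none ∨ u' i = none)) ⊆
        Finset.univ.filter (fun i => ∃ x y : Bool, u i = some x ∧ u' i = some y ∧ x ≠ y) := by
      intro i hi
      simp only [Finset.mem_filter, Finset.mem_univ, true_and, not_or] at hi ⊢
      obtain ⟨h1, h2⟩ := hi
      obtain ⟨x, hx⟩ := Option.ne_none_iff_exists'.mp h1
      obtain ⟨y, hy⟩ := Option.ne_none_iff_exists'.mp h2
      refine ⟨x, y, hx, hy, ?_⟩
      have hvx := hcov i x hx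
      have hvy := hcov' i y hy
      simp only at hvy
      intro h
      subst h
      rw [hvx] at hvy
      simp at hvy
    have hunion : (Finset.univ.filter (fun i => u i = none ∨ u' i = none)).card ≤ a + b := by
      calc (Finset.univ.filter (fun i => u i = none ∨ u' i = none)).card
          ≤ (Finset.univ.filter (fun i => u i = none) ∪
             Finset.univ.filter (fun i => u' i = none)).card := by
            apply Finset.card_le_card
            intro i hi
            simp only [Finset.mem_filter, Finset.mem_union, Finset.mem_univ, true_and] at hi ⊢
            exact hi
        _ ≤ a + b := by
            rw [← ha, ← hb]
            exact Finset.card_union_le _ _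
    have hcompl := Finset.card_filter_add_card_filter_not
      (s := (Finset.univ : Finset (Fin d))) (p := fun i => u i = none ∨ u' i = none)
    have hc := Finset.card_le_card hsub
    simp only [Finset.card_univ, Fintype.card_fin] at hcompl
    unfold distS
    omega
  by_cases h : u = u'
  · have : distS u u' = 0 := by
      subst h
      unfold distS
      rw [Finset.card_eq_zero, Finset.filter_eq_empty_iff]
      rintro i - ⟨x, y, hx, hy, hxy⟩
      rw [hx] at hy
      exact hxy (Option.some_injective _ hy)
    omega
  · have := (hU u huU u' hu'U h).2
    omega
end

section
/- For every d ≥ 2, there exists a set U ⊆ {0,1,*}^d of size 3·2^{d−2} such that for any two distinct u, u' ∈ U, the number of coordinates where u and u' take distinct values in {0,1} is between 1 and d−1. -/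
def Pp (x y : Option Bool) : Prop := ∃ a b : Bool, x = some a ∧ y = some b ∧ a ≠ b

instance (x y : Option Bool) : Decidable (Pp x y) := by
  unfold Pp; infer_instance

def pre3 : Fin 3 → Option Bool × Option Bool :=
  ![(some true, some true), (some true, some false), (some false, none)]

def emb (m : ℕ) (p : Fin 3 × (Fin m → Bool)) : Fin (m + 2) → Option Bool :=
  Fin.cons (pre3 p.1).1 (Fin.cons (pre3 p.1).2 (fun i => some (p.2 i)))

lemma emb_inj (m : ℕ) : Function.Injective (emb m) := by
  rintro ⟨a, f⟩ ⟨b, g⟩ h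
  have h0 := congrFun h 0
  have h1 := congrFun h (Fin.succ 0)
  simp only [emb, Fin.cons_zero, Fin.cons_succ] at h0 h1
  have hab : a = b := by fin_cases a <;> fin_cases b <;> simp_all [pre3]
  subst hab
  have hfg : f = g := by
    funext i
    have := congrFun h (Fin.succ (Fin.succ i))
    simpa [emb, Fin.cons_succ] using this
  simp [hfg]

lemma Pp_some (a b : Bool) : Pp (some a) (some b) ↔ a ≠ b := by
  simp [Pp]

lemma distS_emb (m : ℕ) (p q : Fin 3 × (Fin m → Bool)) :
    distS (emb m p) (emb m q) =
      (if Pp (pre3 p.1).1 (pre3 q.1).1 then 1 else 0) +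
      ((if Pp (pre3 p.1).2 (pre3 q.1).2 then 1 else 0) +
       ∑ i : Fin m, if Pp (some (p.2 i)) (some (q.2 i)) then 1 else 0) := by
  unfold distS
  rw [Finset.card_filter, Fin.sum_univ_succ, Fin.sum_univ_succ]
  simp only [emb, Fin.cons_zero, Fin.cons_succ, Pp]


/-- Lower bound n(d−1,d) ≥ 3·2^(d−2). -/
theorem lower_bound_construction (d : ℕ) (hd : 2 ≤ d) :
    ∃ U : Finset (Fin d → Option Bool), U.card = 3 * 2 ^ (d - 2) ∧
      ∀ u ∈ U, ∀ u' ∈ U, u ≠ u' → 1 ≤ distS u u' ∧ distS u u' ≤ d - 1 := by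
  obtain ⟨m, rfl⟩ : ∃ m, d = m + 2 := ⟨d - 2, by omega⟩
  refine ⟨Finset.image (emb m) Finset.univ, ?_, ?_⟩
  · rw [Finset.card_image_of_injective _ (emb_inj m)]
    simp
  · intro u hu u' hu' hne
    obtain ⟨p, -, rfl⟩ := Finset.mem_image.mp hu
    obtain ⟨q, -, rfl⟩ := Finset.mem_image.mp hu'
    obtain ⟨a, f⟩ := p
    obtain ⟨b, g⟩ := q
    have hpq : (a, f) ≠ (b, g) := fun h => hne (by rw [h])
    rw [distS_emb]
    dsimp only
    have hsum1 : (∑ i : Fin m, if Pp (some (f i)) (some (g i)) then 1 else 0) ≤ m := by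
      calc (∑ i : Fin m, if Pp (some (f i)) (some (g i)) then 1 else 0)
          ≤ ∑ _i : Fin m, 1 := Finset.sum_le_sum (fun i _ => by split <;> omega)
        _ = m := by simp
    constructor
    · by_cases hab : a = b
      · have hfg : f ≠ g := by
          intro h; exact hpq (by rw [hab, h])
        obtain ⟨i, hi⟩ := Function.ne_iff.mp hfg
        have h1 : (1 : ℕ) ≤ ∑ i : Fin m, if Pp (some (f i)) (some (g i)) then 1 else 0 := by
          calc (1 : ℕ) = if Pp (some (f i)) (some (g i)) then 1 else 0 := by
                rw [if_pos ((Pp_some _ _).mpr hi)]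
            _ ≤ ∑ i : Fin m, if Pp (some (f i)) (some (g i)) then 1 else 0 :=
                Finset.single_le_sum
                  (f := fun i : Fin m => if Pp (some (f i)) (some (g i)) then 1 else 0)
                  (fun i _ => Nat.zero_le _) (Finset.mem_univ i)
        omega
      · have hpre : 1 ≤ (if Pp (pre3 a).1 (pre3 b).1 then 1 else 0) +
            (if Pp (pre3 a).2 (pre3 b).2 then (1:ℕ) else 0) := by
          fin_cases a <;> fin_cases b <;> simp_all <;> decide
        omega
    · have hpre : (if Pp (pre3 a).1 (pre3 b).1 then 1 else 0) +
          (if Pp (pre3 a).2 (pre3 b).2 then (1:ℕ) else 0) ≤ 1 := by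
        fin_cases a <;> fin_cases b <;> decide
      omega
end
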